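/- arXiv:1811.10707 — 6 statements merged into one kernel-verified Lean document; each statement's English description precedes it below -/
import Mathlib

section
/- Let G be an abelian group, A, B ⊆ G finite sets with |A| = |B| = N, and Γ ⊆ A × B with |Γ| ≥ (1-δ)N² for some 0 < δ < 1/4. If |A +_Γ B| ≤ KN for some K ≥ 1, then there exist subsets A' ⊆ A and B' ⊆ B with |A'| ≥ (1-δ^{1/2})N, |B'| ≥ (1-δ^{1/2})N, and |A' + B'| ≤ K³N/(1-2δ^{1/2})². -/
open Finset Pointwise

/-!
Put `s = √δ`. At most `δN² = s²N²` pairs of `A × B` are missing from `Γ`, so by Markov's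
inequality all but `sN` rows (columns) of `Γ` have at least `(1 - s)N` elements; let `A'` (`B'`)
be these rows (columns). For `a' ∈ A'` and `b' ∈ B'`, at least `(1 - s)²N² - s²N² = (1 - 2s)N²`
pairs `(a, b) ∈ Γ` have `(a, b'), (a', b) ∈ Γ`, and each gives its own representation
`a' + b' = (a' + b) + (a + b') - (a + b)` with all three terms in `A +_Γ B`. Hence
`|A' + B'| (1 - 2s)N² ≤ |A +_Γ B|³ ≤ K³N³`.
-/

section Counting

variable {α β : Type*}

lemma one_sub_mul_card_le_card_filter_of_le_sum (A : Finset α) (f : α → ℝ) {M s : ℝ}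
    (hM : 0 < M) (hs : 0 < s) (hf : ∀ a ∈ A, f a ≤ M)
    (hsum : (1 - s ^ 2) * #A * M ≤ ∑ a ∈ A, f a) :
    (1 - s) * #A ≤ #{a ∈ A | (1 - s) * M ≤ f a} := by
  set A' := {a ∈ A | (1 - s) * M ≤ f a}
  set A'' := {a ∈ A | ¬(1 - s) * M ≤ f a}
  have hlarge : ∑ a ∈ A', f a ≤ #A' * M := by
    simpa using sum_le_card_nsmul A' f M fun a ha => hf a (mem_of_mem_filter a ha)
  have hsmall : ∑ a ∈ A'', f a ≤ #A'' * ((1 - s) * M) := by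
    simpa using sum_le_card_nsmul A'' f _ fun a ha => (not_le.1 (mem_filter.1 ha).2).le
  have hcard : (#A' : ℝ) + #A'' = #A := by exact_mod_cast card_filter_add_card_filter_not _
  rw [← sum_filter_add_sum_filter_not A (fun a => (1 - s) * M ≤ f a), ← hcard] at hsum
  have key : s * M * ((1 - s) * #A) ≤ s * M * #A' := by
    rw [← hcard]
    nlinarith
  exact le_of_mul_le_mul_left key (mul_pos hs hM)

variable [DecidableEq α] [DecidableEq β] {A : Finset α} {B : Finset β} {Γ : Finset (α × β)}

lemma sum_card_row_eq_card (hΓ : Γ ⊆ A ×ˢ B) : ∑ a ∈ A, #{b ∈ B | (a, b) ∈ Γ} = #Γ := by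
  have hΓ' : #Γ = #{p ∈ A ×ˢ B | p ∈ Γ} := by rw [filter_mem_eq_inter, inter_eq_right.2 hΓ]
  rw [hΓ', card_filter, sum_product]
  simp only [card_filter]

lemma sum_card_col_eq_card (hΓ : Γ ⊆ A ×ˢ B) : ∑ b ∈ B, #{a ∈ A | (a, b) ∈ Γ} = #Γ := by
  have hΓ' : #Γ = #{p ∈ A ×ˢ B | p ∈ Γ} := by rw [filter_mem_eq_inter, inter_eq_right.2 hΓ]
  rw [hΓ', card_filter, sum_product_right]
  simp only [card_filter]

lemma one_sub_mul_card_le_card_filter_row (hΓ : Γ ⊆ A ×ˢ B) {s : ℝ} (hs : 0 < s)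
    (hB : B.Nonempty) (hΓcard : (1 - s ^ 2) * #A * #B ≤ #Γ) :
    (1 - s) * #A ≤ #{a ∈ A | (1 - s) * #B ≤ #{b ∈ B | (a, b) ∈ Γ}} := by
  refine one_sub_mul_card_le_card_filter_of_le_sum A _ (by simpa using hB.card_pos) hs
    (fun a _ => by exact_mod_cast card_filter_le _ _) ?_
  rwa [← Nat.cast_sum, sum_card_row_eq_card hΓ]

lemma one_sub_mul_card_le_card_filter_col (hΓ : Γ ⊆ A ×ˢ B) {s : ℝ} (hs : 0 < s)
    (hA : A.Nonempty) (hΓcard : (1 - s ^ 2) * #A * #B ≤ #Γ) :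
    (1 - s) * #B ≤ #{b ∈ B | (1 - s) * #A ≤ #{a ∈ A | (a, b) ∈ Γ}} := by
  refine one_sub_mul_card_le_card_filter_of_le_sum B _ (by simpa using hA.card_pos) hs
    (fun b _ => by exact_mod_cast card_filter_le _ _) ?_
  rwa [← Nat.cast_sum, sum_card_col_eq_card hΓ, mul_right_comm]

lemma card_col_mul_card_row_le (a' : α) (b' : β) :
    #{a ∈ A | (a, b') ∈ Γ} * #{b ∈ B | (a', b) ∈ Γ} ≤
      #{p ∈ Γ | (p.1, b') ∈ Γ ∧ (a', p.2) ∈ Γ} + #((A ×ˢ B) \ Γ) := by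
  rw [← card_product]
  refine (card_le_card fun p hp => ?_).trans (card_union_le _ _)
  simp only [mem_product, mem_filter] at hp
  by_cases hpΓ : p ∈ Γ
  · exact mem_union_left _ (mem_filter.2 ⟨hpΓ, hp.1.2, hp.2.2⟩)
  · exact mem_union_right _ (mem_sdiff.2 ⟨mem_product.2 ⟨hp.1.1, hp.2.1⟩, hpΓ⟩)

end Counting

lemma card_mul_le_card_of_le_card_fiber {ι κ : Type*} [DecidableEq κ] {U : Finset ι}
    {T : Finset κ} {f : ι → κ} {m : ℝ} (h : ∀ σ ∈ T, m ≤ #{x ∈ U | f x = σ}) :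
    #T * m ≤ #U := by
  calc #T * m ≤ ∑ σ ∈ T, (#{x ∈ U | f x = σ} : ℝ) := by
        simpa [mul_comm] using card_nsmul_le_sum T _ m h
    _ = #{x ∈ U | f x ∈ T} := by
        rw [card_eq_sum_card_fiberwise (s := {x ∈ U | f x ∈ T}) fun x hx => (mem_filter.1 hx).2,
          Nat.cast_sum]
        refine sum_congr rfl fun σ hσ => ?_
        rw [filter_filter]
        congr 2
        exact filter_congr fun x _ => ⟨fun h => ⟨h ▸ hσ, h⟩, And.right⟩
    _ ≤ #U := by exact_mod_cast card_le_card (filter_subset _ _)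

section Sumset

variable {G : Type*} [AddCommGroup G] [DecidableEq G]

def restrictedSumset (Γ : Finset (G × G)) : Finset G := Γ.image fun p => p.1 + p.2

lemma card_filter_row_col_le_card_filter_sub (Γ : Finset (G × G)) (a' b' : G) :
    #{p ∈ Γ | (p.1, b') ∈ Γ ∧ (a', p.2) ∈ Γ} ≤
      #{x ∈ restrictedSumset Γ ×ˢ restrictedSumset Γ ×ˢ restrictedSumset Γ |
        x.1 + x.2.1 - x.2.2 = a' + b'} := by
  refine card_le_card_of_injOn (fun p => (a' + p.2, p.1 + b', p.1 + p.2)) (fun p hp => ?_)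
    fun p _ q _ h => ?_
  · obtain ⟨hpΓ, hcol, hrow⟩ := mem_filter.1 hp
    refine mem_filter.2 ⟨mem_product.2 ⟨?_, mem_product.2 ⟨?_, ?_⟩⟩, ?_⟩
    · exact mem_image_of_mem _ hrow
    · exact mem_image_of_mem _ hcol
    · exact mem_image_of_mem _ hpΓ
    · show a' + p.2 + (p.1 + b') - (p.1 + p.2) = a' + b'
      abel
  · simp only [Prod.mk.injEq, add_right_inj, add_left_inj] at h
    exact Prod.ext h.2.1 h.1

lemma card_add_mul_le_card_restrictedSumset_pow {A B A₀ B₀ : Finset G} {Γ : Finset (G × G)}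
    {r e : ℝ} (hr : 0 ≤ r) (hA₀ : ∀ a ∈ A₀, r ≤ #{b ∈ B | (a, b) ∈ Γ})
    (hB₀ : ∀ b ∈ B₀, r ≤ #{a ∈ A | (a, b) ∈ Γ}) (he : #((A ×ˢ B) \ Γ) ≤ e) :
    #(A₀ + B₀) * (r ^ 2 - e) ≤ (#(restrictedSumset Γ) : ℝ) ^ 3 := by
  have hcube : ((#(restrictedSumset Γ ×ˢ restrictedSumset Γ ×ˢ restrictedSumset Γ) : ℕ) : ℝ) =
      (#(restrictedSumset Γ) : ℝ) ^ 3 := by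
    rw [card_product, card_product]; push_cast; ring
  rw [← hcube]
  refine card_mul_le_card_of_le_card_fiber (f := fun x => x.1 + x.2.1 - x.2.2) fun σ hσ => ?_
  obtain ⟨a', ha', b', hb', rfl⟩ := mem_add.1 hσ
  have hprod : r ^ 2 ≤ (#{a ∈ A | (a, b') ∈ Γ} : ℝ) * #{b ∈ B | (a', b) ∈ Γ} := by
    rw [sq]; exact mul_le_mul (hB₀ b' hb') (hA₀ a' ha') hr (by positivity)
  have hcount : (#{a ∈ A | (a, b') ∈ Γ} : ℝ) * #{b ∈ B | (a', b) ∈ Γ} ≤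
      #{p ∈ Γ | (p.1, b') ∈ Γ ∧ (a', p.2) ∈ Γ} + #((A ×ˢ B) \ Γ) := by
    exact_mod_cast card_col_mul_card_row_le a' b'
  calc r ^ 2 - e ≤ #{p ∈ Γ | (p.1, b') ∈ Γ ∧ (a', p.2) ∈ Γ} := by linarith
    _ ≤ _ := by exact_mod_cast card_filter_row_col_le_card_filter_sub Γ a' b'

end Sumset

theorem stmt_0_general {G : Type*} [AddCommGroup G] [DecidableEq G]
    (A B : Finset G) (N : ℕ) (hA : A.card = N) (hB : B.card = N)
    (δ K : ℝ) (hδ0 : 0 < δ) (hδ : δ < 1/4)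
    (Γ : Finset (G × G)) (hΓAB : Γ ⊆ A ×ˢ B)
    (hΓcard : (1 - δ) * (N : ℝ) ^ 2 ≤ Γ.card)
    (hsum : ((Γ.image fun p => p.1 + p.2).card : ℝ) ≤ K * N) :
    ∃ A' ⊆ A, ∃ B' ⊆ B,
      (1 - Real.sqrt δ) * N ≤ (A'.card : ℝ) ∧
      (1 - Real.sqrt δ) * N ≤ (B'.card : ℝ) ∧
      ((A' + B').card : ℝ) ≤ K ^ 3 * N / (1 - 2 * Real.sqrt δ) ^ 2 := by
  obtain rfl | hN := Nat.eq_zero_or_pos N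
  · exact ⟨∅, empty_subset A, ∅, empty_subset B, by simp, by simp, by simp⟩
  set s := Real.sqrt δ
  have hs0 : 0 < s := Real.sqrt_pos.2 hδ0
  have hsδ : s ^ 2 = δ := Real.sq_sqrt hδ0.le
  have hs : s < 1 / 2 := by nlinarith
  have hNpos : (0 : ℝ) < N := by exact_mod_cast hN
  have hAne : A.Nonempty := card_pos.1 (hA ▸ hN)
  have hBne : B.Nonempty := card_pos.1 (hB ▸ hN)
  have hΓcard' : (1 - s ^ 2) * #A * #B ≤ #Γ := by rw [hA, hB, hsδ]; linarith
  have hmiss : (#((A ×ˢ B) \ Γ) : ℝ) ≤ s ^ 2 * N ^ 2 := by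
    rw [card_sdiff_of_subset hΓAB, Nat.cast_sub (card_le_card hΓAB), card_product, hA, hB]
    push_cast
    nlinarith
  set A' := {a ∈ A | (1 - s) * N ≤ #{b ∈ B | (a, b) ∈ Γ}}
  set B' := {b ∈ B | (1 - s) * N ≤ #{a ∈ A | (a, b) ∈ Γ}}
  refine ⟨A', filter_subset _ A, B', filter_subset _ B,
    by simpa [hA, hB] using one_sub_mul_card_le_card_filter_row hΓAB hs0 hBne hΓcard',
    by simpa [hA, hB] using one_sub_mul_card_le_card_filter_col hΓAB hs0 hAne hΓcard', ?_⟩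
  have hsumset := card_add_mul_le_card_restrictedSumset_pow (A₀ := A') (B₀ := B')
    (r := (1 - s) * N) (by nlinarith)
    (fun a ha => (mem_filter.1 ha).2) (fun b hb => (mem_filter.1 hb).2) hmiss
  have hcube : (#(restrictedSumset Γ) : ℝ) ^ 3 ≤ (K * N) ^ 3 :=
    pow_le_pow_left₀ (Nat.cast_nonneg _) hsum 3
  have hX : #(A' + B') * (1 - 2 * s) ≤ K ^ 3 * N :=
    le_of_mul_le_mul_right (by nlinarith) (pow_pos hNpos 2)
  rw [le_div_iff₀ (by nlinarith)]
  calc #(A' + B') * (1 - 2 * s) ^ 2 ≤ #(A' + B') * (1 - 2 * s) :=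
        mul_le_mul_of_nonneg_left (by nlinarith) (Nat.cast_nonneg _)
    _ ≤ K ^ 3 * N := hX

theorem stmt_0 {G : Type*} [AddCommGroup G] [DecidableEq G]
    (A B : Finset G) (N : ℕ) (hA : A.card = N) (hB : B.card = N)
    (δ K : ℝ) (hδ0 : 0 < δ) (hδ : δ < 1/4) (hK : 1 ≤ K)
    (Γ : Finset (G × G)) (hΓAB : Γ ⊆ A ×ˢ B)
    (hΓcard : (1 - δ) * (N : ℝ) ^ 2 ≤ Γ.card)
    (hsum : ((Γ.image fun p => p.1 + p.2).card : ℝ) ≤ K * N) :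
    ∃ A' ⊆ A, ∃ B' ⊆ B,
      (1 - Real.sqrt δ) * N ≤ (A'.card : ℝ) ∧
      (1 - Real.sqrt δ) * N ≤ (B'.card : ℝ) ∧
      ((A' + B').card : ℝ) ≤ K ^ 3 * N / (1 - 2 * Real.sqrt δ) ^ 2 :=
  stmt_0_general A B N hA hB δ K hδ0 hδ Γ hΓAB hΓcard hsum
end

section
/- Let G be an abelian group, A, B ⊆ G with |A| = |B| = N, and let ε, δ > 0. The following are equivalent: (1) For every Γ ⊆ A × B with |Γ| ≥ (1-δ)N², there exist A' ⊆ A, B' ⊆ B, S ⊆ A+B with |A'| ≥ (1-ε)N, |B'| ≥ (1-ε)N, |S| ≤ εN, and A' + B' ⊆ (A +_Γ B) ∪ S. (2) For every C ⊆ G, if the number of triples (a,b,c) ∈ A × B × C with a + b = c is at most δN², then one can remove at most εN elements from each of A, B, C to obtain A', B', C' such that no a ∈ A', b ∈ B', c ∈ C' satisfy a + b = c. -/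
/-!
Both statements compare a large restricted sumset with a sparse set of solutions of `a + b = c`,
and the dictionary between them is complementation. Given `C`, take `Γ` to be the pairs of
`A × B` whose sum avoids `C`; then `|A × B \ Γ|` is the number of solutions, and a cover
`A' + B' ⊆ (A +_Γ B) ∪ S` means that every sum from `A' + B'` lying in `C` lies in `S`, so
`C' = C \ S` works. Conversely, given `Γ`, take `C = (A + B) \ (A +_Γ B)`; its solutions are
pairs outside `Γ`, and removing `C'` leaves `A' + B'` covered by `A +_Γ B` together with `C \ C'`.
-/

open Finset Pointwise

section Counting

variable {α : Type*} [DecidableEq α]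

lemma cast_card_sdiff_le_iff {s t : Finset α} {N : ℕ} (hst : s ⊆ t) (ht : #t = N) (ε : ℝ) :
    (#(t \ s) : ℝ) ≤ ε * N ↔ (1 - ε) * N ≤ #s := by
  have hcard : (#(t \ s) : ℝ) + #s = N := by
    rw [← ht]; exact_mod_cast card_sdiff_add_card_eq_card hst
  constructor <;> intro h <;> linarith

section Add

variable [Add α]

lemma card_filter_add_eq_eq_card_filter_add_mem (A B C : Finset α) :
    #(((A ×ˢ B) ×ˢ C).filter fun p => p.1.1 + p.1.2 = p.2) =
      #((A ×ˢ B).filter fun p => p.1 + p.2 ∈ C) :=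
  card_nbij' Prod.fst (fun q => (q, q.1 + q.2))
    (fun p hp => by simp_all) (fun q hq => by simp_all)
    (fun p hp => by simp_all) (fun q _ => rfl)

lemma card_filter_add_notMem_add_card_filter_add_eq (A B C : Finset α) :
    #((A ×ˢ B).filter fun p => p.1 + p.2 ∉ C) +
      #(((A ×ˢ B) ×ˢ C).filter fun p => p.1.1 + p.1.2 = p.2) = #A * #B := by
  rw [card_filter_add_eq_eq_card_filter_add_mem, add_comm, card_filter_add_card_filter_not,
    card_product]

lemma card_filter_add_eq_add_card_le {A B : Finset α} {Γ : Finset (α × α)} (hΓ : Γ ⊆ A ×ˢ B) :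
    #(((A ×ˢ B) ×ˢ ((A + B) \ Γ.image fun p => p.1 + p.2)).filter
        fun p => p.1.1 + p.1.2 = p.2) + #Γ ≤ #A * #B := by
  rw [card_filter_add_eq_eq_card_filter_add_mem, ← card_product,
    ← card_sdiff_add_card_eq_card hΓ]
  gcongr
  intro p hp
  simp only [mem_filter, mem_sdiff, mem_image] at hp ⊢
  exact ⟨hp.1, fun hpΓ => hp.2.2 ⟨p, hpΓ, rfl⟩⟩

lemma add_ne_of_add_subset_image_filter_union {A B C S A' B' : Finset α}
    (hcover : A' + B' ⊆ ((A ×ˢ B).filter fun p => p.1 + p.2 ∉ C).image (fun p => p.1 + p.2) ∪ S) :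
    ∀ a ∈ A', ∀ b ∈ B', ∀ c ∈ C \ S, a + b ≠ c := by
  rintro a ha b hb c hc rfl
  rw [mem_sdiff] at hc
  rcases mem_union.1 (hcover (add_mem_add ha hb)) with hΓ | hS
  · obtain ⟨p, hp, hpab⟩ := mem_image.1 hΓ
    exact (mem_filter.1 hp).2 (hpab ▸ hc.1)
  · exact hc.2 hS

lemma add_subset_image_union_sdiff {A B A' B' C' : Finset α} (Γ : Finset (α × α))
    (hA' : A' ⊆ A) (hB' : B' ⊆ B) (hfree : ∀ a ∈ A', ∀ b ∈ B', ∀ c ∈ C', a + b ≠ c) :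
    A' + B' ⊆ (Γ.image fun p => p.1 + p.2) ∪
      (((A + B) \ Γ.image fun p => p.1 + p.2) \ C') := by
  intro x hx
  obtain ⟨a, ha, b, hb, rfl⟩ := mem_add.1 hx
  by_cases hΓ : a + b ∈ Γ.image fun p => p.1 + p.2
  · exact mem_union_left _ hΓ
  · refine mem_union_right _ (mem_sdiff.2 ⟨mem_sdiff.2 ⟨add_mem_add (hA' ha) (hB' hb), hΓ⟩, ?_⟩)
    exact fun hC' => hfree a ha b hb _ hC' rfl

end Add

end Counting

theorem stmt_2_general {G : Type*} [AddCommGroup G] [DecidableEq G]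
    (A B : Finset G) (N : ℕ) (hA : A.card = N) (hB : B.card = N)
    (ε δ : ℝ) :
    (∀ Γ : Finset (G × G), Γ ⊆ A ×ˢ B → (1 - δ) * (N : ℝ) ^ 2 ≤ Γ.card →
      ∃ A' ⊆ A, ∃ B' ⊆ B, ∃ S ⊆ A + B,
        (1 - ε) * N ≤ (A'.card : ℝ) ∧ (1 - ε) * N ≤ (B'.card : ℝ) ∧
        (S.card : ℝ) ≤ ε * N ∧
        A' + B' ⊆ (Γ.image fun p => p.1 + p.2) ∪ S)
    ↔
    (∀ C : Finset G,
      (((((A ×ˢ B) ×ˢ C).filter fun p => p.1.1 + p.1.2 = p.2).card : ℝ) ≤ δ * (N : ℝ) ^ 2) →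
      ∃ A' ⊆ A, ∃ B' ⊆ B, ∃ C' ⊆ C,
        ((A \ A').card : ℝ) ≤ ε * N ∧ ((B \ B').card : ℝ) ≤ ε * N ∧
        ((C \ C').card : ℝ) ≤ ε * N ∧
        ∀ a ∈ A', ∀ b ∈ B', ∀ c ∈ C', a + b ≠ c) := by
  constructor
  · intro hcover C hC
    have hΓ : (1 - δ) * (N : ℝ) ^ 2 ≤ #((A ×ˢ B).filter fun p => p.1 + p.2 ∉ C) := by
      have hsum := congrArg (Nat.cast : ℕ → ℝ) (card_filter_add_notMem_add_card_filter_add_eq A B C)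
      rw [hA, hB] at hsum
      push_cast at hsum
      linarith
    obtain ⟨A', hA', B', hB', S, -, hA'card, hB'card, hS, hsub⟩ :=
      hcover _ (filter_subset _ _) hΓ
    refine ⟨A', hA', B', hB', C \ S, sdiff_subset, (cast_card_sdiff_le_iff hA' hA ε).2 hA'card,
      (cast_card_sdiff_le_iff hB' hB ε).2 hB'card, ?_, add_ne_of_add_subset_image_filter_union hsub⟩
    rw [sdiff_sdiff_right_self]
    exact le_trans (by exact_mod_cast card_le_card inter_subset_right) hS
  · intro hremove Γ hΓ hΓcard
    have hC : (#(((A ×ˢ B) ×ˢ ((A + B) \ Γ.image fun p => p.1 + p.2)).filter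
        fun p => p.1.1 + p.1.2 = p.2) : ℝ) ≤ δ * (N : ℝ) ^ 2 := by
      have hle := Nat.cast_le (α := ℝ) |>.2 (card_filter_add_eq_add_card_le hΓ)
      rw [hA, hB] at hle
      push_cast at hle
      linarith
    obtain ⟨A', hA', B', hB', C', -, hA'card, hB'card, hC'card, hfree⟩ := hremove _ hC
    exact ⟨A', hA', B', hB', _, sdiff_subset.trans sdiff_subset,
      (cast_card_sdiff_le_iff hA' hA ε).1 hA'card, (cast_card_sdiff_le_iff hB' hB ε).1 hB'card,
      hC'card, add_subset_image_union_sdiff Γ hA' hB' hfree⟩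

theorem stmt_2 {G : Type*} [AddCommGroup G] [DecidableEq G]
    (A B : Finset G) (N : ℕ) (hA : A.card = N) (hB : B.card = N)
    (ε δ : ℝ) (hε : 0 < ε) (hδ : 0 < δ) :
    (∀ Γ : Finset (G × G), Γ ⊆ A ×ˢ B → (1 - δ) * (N : ℝ) ^ 2 ≤ Γ.card →
      ∃ A' ⊆ A, ∃ B' ⊆ B, ∃ S ⊆ A + B,
        (1 - ε) * N ≤ (A'.card : ℝ) ∧ (1 - ε) * N ≤ (B'.card : ℝ) ∧
        (S.card : ℝ) ≤ ε * N ∧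
        A' + B' ⊆ (Γ.image fun p => p.1 + p.2) ∪ S)
    ↔
    (∀ C : Finset G,
      (((((A ×ˢ B) ×ˢ C).filter fun p => p.1.1 + p.1.2 = p.2).card : ℝ) ≤ δ * (N : ℝ) ^ 2) →
      ∃ A' ⊆ A, ∃ B' ⊆ B, ∃ C' ⊆ C,
        ((A \ A').card : ℝ) ≤ ε * N ∧ ((B \ B').card : ℝ) ≤ ε * N ∧
        ((C \ C').card : ℝ) ≤ ε * N ∧
        ∀ a ∈ A', ∀ b ∈ B', ∀ c ∈ C', a + b ≠ c) :=
  stmt_2_general A B N hA hB ε δ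
end

section
/- Suppose statement (2) of the removal-lemma formulation holds for all C ⊆ G (with parameters δ, ε). Then for every Γ ⊆ A × B with |Γ| ≥ (1-δ)N² and |A +_Γ B| ≤ KN, there exist A' ⊆ A and B' ⊆ B with |A'| ≥ (1-ε)N, |B'| ≥ (1-ε)N and |A' + B'| ≤ |A +_Γ B| + εN. -/
/-!
Let `S = A +_Γ B` and apply statement (2) to `C = (A + B) \ S`. A solution `a + b = c` with
`c ∈ C` has `(a, b) ∉ Γ` and is determined by `(a, b)`, so there are at most `N² - |Γ| ≤ δN²`
of them. The removal lemma then yields `A'`, `B'`, `C'` with no solution in `A' × B' × C'`,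
so every sum in `A' + B'` lies in `S` or among the at most `εN` elements removed from `C`.
-/

open Finset Pointwise

theorem one_sub_mul_le_card_of_card_sdiff_le {α : Type*} [DecidableEq α] {A A' : Finset α}
    {N : ℕ} {ε : ℝ} (hA' : A' ⊆ A) (hA : A.card = N) (hε : ((A \ A').card : ℝ) ≤ ε * N) :
    (1 - ε) * N ≤ A'.card := by
  have h : ((A \ A').card : ℝ) + A'.card = N := by
    exact_mod_cast (card_sdiff_add_card_eq_card hA').trans hA
  linarith

section

variable {G : Type*} [Add G] [DecidableEq G]

theorem card_filter_add_eq_le_card_sdiff {A B C : Finset G} {Γ : Finset (G × G)}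
    (hC : Disjoint C (Γ.image fun p => p.1 + p.2)) :
    (((A ×ˢ B) ×ˢ C).filter fun p => p.1.1 + p.1.2 = p.2).card ≤ ((A ×ˢ B) \ Γ).card := by
  refine card_le_card_of_injOn Prod.fst ?_ ?_
  · rintro ⟨⟨a, b⟩, c⟩ hp
    simp only [mem_coe, mem_filter, mem_product] at hp
    obtain ⟨⟨hab, hc⟩, rfl⟩ := hp
    exact mem_sdiff.2 ⟨mem_product.2 hab,
      fun hΓ => disjoint_left.1 hC hc (mem_image_of_mem (fun p => p.1 + p.2) hΓ)⟩
  · rintro ⟨x, c⟩ hp ⟨y, d⟩ hq (rfl : x = y)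
    simp only [mem_coe, mem_filter] at hp hq
    rw [← hp.2, ← hq.2]

theorem card_add_le_card_add_card_sdiff {A' B' S C C' : Finset G} (hC : A' + B' ⊆ S ∪ C)
    (hfree : ∀ a ∈ A', ∀ b ∈ B', ∀ c ∈ C', a + b ≠ c) :
    (A' + B').card ≤ S.card + (C \ C').card := by
  refine (card_le_card fun x hx => ?_).trans (card_union_le S (C \ C'))
  obtain ⟨a, ha, b, hb, rfl⟩ := mem_add.1 hx
  rw [mem_union, mem_sdiff]
  rcases mem_union.1 (hC hx) with hS | hC
  · exact .inl hS
  · exact .inr ⟨hC, fun hC' => hfree a ha b hb _ hC' rfl⟩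

end

theorem stmt_3_general {G : Type*} [AddCommGroup G] [DecidableEq G]
    (A B : Finset G) (N : ℕ) (hA : A.card = N) (hB : B.card = N)
    (ε δ : ℝ)
    (h2 : ∀ C : Finset G,
      (((((A ×ˢ B) ×ˢ C).filter fun p => p.1.1 + p.1.2 = p.2).card : ℝ) ≤ δ * (N : ℝ) ^ 2) →
      ∃ A' ⊆ A, ∃ B' ⊆ B, ∃ C' ⊆ C,
        ((A \ A').card : ℝ) ≤ ε * N ∧ ((B \ B').card : ℝ) ≤ ε * N ∧
        ((C \ C').card : ℝ) ≤ ε * N ∧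
        ∀ a ∈ A', ∀ b ∈ B', ∀ c ∈ C', a + b ≠ c)
    (Γ : Finset (G × G)) (hΓAB : Γ ⊆ A ×ˢ B)
    (hΓcard : (1 - δ) * (N : ℝ) ^ 2 ≤ Γ.card) :
    ∃ A' ⊆ A, ∃ B' ⊆ B,
      (1 - ε) * N ≤ (A'.card : ℝ) ∧ (1 - ε) * N ≤ (B'.card : ℝ) ∧
      ((A' + B').card : ℝ) ≤ ((Γ.image fun p => p.1 + p.2).card : ℝ) + ε * N := by
  set S := Γ.image fun p => p.1 + p.2
  have hsolutions : (((A ×ˢ B) ×ˢ ((A + B) \ S)).filter fun p => p.1.1 + p.1.2 = p.2).card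
      ≤ ((A ×ˢ B) \ Γ).card := card_filter_add_eq_le_card_sdiff sdiff_disjoint
  have hcomplement : ((A ×ˢ B) \ Γ).card + Γ.card = N ^ 2 := by
    rw [card_sdiff_add_card_eq_card hΓAB, card_product, hA, hB, sq]
  obtain ⟨A', hA', B', hB', C', -, hAε, hBε, hCε, hfree⟩ := h2 ((A + B) \ S) <| by
    have := (Nat.cast_le (α := ℝ)).2 hsolutions
    have : (((A ×ˢ B) \ Γ).card : ℝ) + Γ.card = N ^ 2 := by exact_mod_cast hcomplement
    linarith
  refine ⟨A', hA', B', hB', one_sub_mul_le_card_of_card_sdiff_le hA' hA hAε,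
    one_sub_mul_le_card_of_card_sdiff_le hB' hB hBε, ?_⟩
  have hsums : A' + B' ⊆ S ∪ ((A + B) \ S) := by
    rw [union_sdiff_self_eq_union]
    exact (add_subset_add hA' hB').trans subset_union_right
  have := (Nat.cast_le (α := ℝ)).2 (card_add_le_card_add_card_sdiff hsums hfree)
  push_cast at this
  linarith

theorem stmt_3 {G : Type*} [AddCommGroup G] [DecidableEq G]
    (A B : Finset G) (N : ℕ) (hA : A.card = N) (hB : B.card = N)
    (ε δ K : ℝ) (hε : 0 < ε) (hδ : 0 < δ) (hK : 1 ≤ K)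
    (h2 : ∀ C : Finset G,
      (((((A ×ˢ B) ×ˢ C).filter fun p => p.1.1 + p.1.2 = p.2).card : ℝ) ≤ δ * (N : ℝ) ^ 2) →
      ∃ A' ⊆ A, ∃ B' ⊆ B, ∃ C' ⊆ C,
        ((A \ A').card : ℝ) ≤ ε * N ∧ ((B \ B').card : ℝ) ≤ ε * N ∧
        ((C \ C').card : ℝ) ≤ ε * N ∧
        ∀ a ∈ A', ∀ b ∈ B', ∀ c ∈ C', a + b ≠ c)
    (Γ : Finset (G × G)) (hΓAB : Γ ⊆ A ×ˢ B)
    (hΓcard : (1 - δ) * (N : ℝ) ^ 2 ≤ Γ.card)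
    (hsum : ((Γ.image fun p => p.1 + p.2).card : ℝ) ≤ K * N) :
    ∃ A' ⊆ A, ∃ B' ⊆ B,
      (1 - ε) * N ≤ (A'.card : ℝ) ∧ (1 - ε) * N ≤ (B'.card : ℝ) ∧
      ((A' + B').card : ℝ) ≤ ((Γ.image fun p => p.1 + p.2).card : ℝ) + ε * N :=
  stmt_3_general A B N hA hB ε δ h2 Γ hΓAB hΓcard
end

section
/- Let S = {x ∈ ℝ^d : 1-η ≤ ‖x‖ ≤ 1} with 0 < η < 1. Suppose y₁, y₂ ∈ ℝ^d satisfy ‖y₁‖ = 2 - t₁ and ‖y₂‖ = 2 - t₂ with t₁, t₂ ∈ (0,2), and there exists x ∈ ℝ^d with x ∈ S, y₁ - x ∈ S, y₂ - x ∈ S (i.e. x lies in R_{y₁} ∩ R_{y₂} where R_y = S ∩ (y - S)). Then ‖y₁ - y₂‖ < 2(t₁^{1/2} + t₂^{1/2}). -/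
lemma aux_stmt5 {d : ℕ} (y x : EuclideanSpace ℝ (Fin d)) (t : ℝ) (ht : 0 < t)
    (hy : ‖y‖ = 2 - t) (hx : ‖x‖ ≤ 1) (hyx : ‖y - x‖ ≤ 1) :
    ‖y - (2:ℝ) • x‖ < 2 * Real.sqrt t := by
  have e1 := norm_sub_sq_real y x
  have e2 := norm_sub_sq_real y ((2:ℝ) • x)
  rw [real_inner_smul_right, norm_smul] at e2
  simp only [Real.norm_ofNat] at e2
  have hsq : (2 * Real.sqrt t) ^ 2 = 4 * t := by
    rw [mul_pow, Real.sq_sqrt ht.le]; ring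
  have hlt : ‖y - (2:ℝ) • x‖ ^ 2 < (2 * Real.sqrt t) ^ 2 := by
    rw [hsq]
    nlinarith [norm_nonneg (y - x), norm_nonneg x, sq_nonneg t, norm_nonneg (y - (2:ℝ) • x)]
  exact lt_of_pow_lt_pow_left₀ 2 (by positivity) hlt

theorem stmt_5 (d : ℕ) (η : ℝ) (hη0 : 0 < η) (hη1 : η < 1)
    (S : Set (EuclideanSpace ℝ (Fin d)))
    (hS : S = {x : EuclideanSpace ℝ (Fin d) | 1 - η ≤ ‖x‖ ∧ ‖x‖ ≤ 1})
    (y₁ y₂ : EuclideanSpace ℝ (Fin d)) (t₁ t₂ : ℝ)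
    (ht₁ : t₁ ∈ Set.Ioo (0:ℝ) 2) (ht₂ : t₂ ∈ Set.Ioo (0:ℝ) 2)
    (hy₁ : ‖y₁‖ = 2 - t₁) (hy₂ : ‖y₂‖ = 2 - t₂)
    (x : EuclideanSpace ℝ (Fin d))
    (hx : x ∈ S) (hx₁ : y₁ - x ∈ S) (hx₂ : y₂ - x ∈ S) :
    ‖y₁ - y₂‖ < 2 * (Real.sqrt t₁ + Real.sqrt t₂) := by
  rw [hS] at hx hx₁ hx₂
  have h1 := aux_stmt5 y₁ x t₁ ht₁.1 hy₁ hx.2 hx₁.2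
  have h2 := aux_stmt5 y₂ x t₂ ht₂.1 hy₂ hx.2 hx₂.2
  have htri : ‖y₁ - y₂‖ ≤ ‖y₁ - (2:ℝ) • x‖ + ‖y₂ - (2:ℝ) • x‖ := by
    have : y₁ - y₂ = (y₁ - (2:ℝ) • x) - (y₂ - (2:ℝ) • x) := by abel
    rw [this]
    exact norm_sub_le _ _
  linarith
end

section
/- Let S = {x ∈ ℝ^d : 1-η ≤ ‖x‖ ≤ 1} with 0 < η ≤ 1/2 and d ≥ 3. Then the set T := {(x,y) ∈ ℝ^d × ℝ^d : x ∈ S, x - y ∈ S, x + y ∈ S} has volume at most (2η)^{d/2} V_d · vol(S), where V_d is the volume of the unit ball in ℝ^d. -/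
open MeasureTheory

theorem stmt_11 (d : ℕ) (hd : 3 ≤ d) (η : ℝ) (hη0 : 0 < η) (hη1 : η ≤ 1/2)
    (S : Set (EuclideanSpace ℝ (Fin d)))
    (hS : S = {x : EuclideanSpace ℝ (Fin d) | 1 - η ≤ ‖x‖ ∧ ‖x‖ ≤ 1})
    (T : Set (EuclideanSpace ℝ (Fin d) × EuclideanSpace ℝ (Fin d)))
    (hT : T = {p : EuclideanSpace ℝ (Fin d) × EuclideanSpace ℝ (Fin d) |
      p.1 ∈ S ∧ p.1 - p.2 ∈ S ∧ p.1 + p.2 ∈ S}) :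
    volume T ≤ ENNReal.ofReal ((2 * η) ^ ((d : ℝ) / 2)) *
      volume (Metric.closedBall (0 : EuclideanSpace ℝ (Fin d)) 1) * volume S := by
  have h2η : (0:ℝ) ≤ 2 * η := by linarith
  have hsub : T ⊆ S ×ˢ Metric.closedBall (0 : EuclideanSpace ℝ (Fin d)) (Real.sqrt (2*η)) := by
    rintro ⟨x, y⟩ hp
    rw [hT] at hp
    obtain ⟨hx, hxy, hxy'⟩ := hp
    rw [hS] at hx hxy hxy'
    refine ⟨by rw [hS]; exact hx, ?_⟩
    simp only [Metric.mem_closedBall, dist_zero_right]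
    rw [show (Real.sqrt (2*η)) = Real.sqrt (2*η) from rfl]
    have key : ‖x + y‖ ^ 2 + ‖x - y‖ ^ 2 = 2 * ‖x‖ ^ 2 + 2 * ‖y‖ ^ 2 := by
      rw [norm_add_sq_real, norm_sub_sq_real]; ring
    have hy2 : ‖y‖ ^ 2 ≤ 2 * η := by
      nlinarith [hx.1, hx.2, hxy.2, hxy'.2, norm_nonneg (x - y), norm_nonneg (x + y),
        norm_nonneg x, norm_nonneg y]
    rw [show Real.sqrt (2*η) = Real.sqrt (2*η) from rfl]
    exact (Real.le_sqrt (norm_nonneg y) h2η).2 hy2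
  have hvol : volume T ≤ volume S *
      volume (Metric.closedBall (0 : EuclideanSpace ℝ (Fin d)) (Real.sqrt (2*η))) := by
    calc volume T ≤ volume (S ×ˢ Metric.closedBall (0 : EuclideanSpace ℝ (Fin d))
        (Real.sqrt (2*η))) := measure_mono hsub
      _ = _ := by rw [MeasureTheory.Measure.volume_eq_prod, Measure.prod_prod]
  have hball : volume (Metric.closedBall (0 : EuclideanSpace ℝ (Fin d)) (Real.sqrt (2*η)))
      = ENNReal.ofReal ((2 * η) ^ ((d : ℝ) / 2)) *
        volume (Metric.closedBall (0 : EuclideanSpace ℝ (Fin d)) 1) := by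
    rw [Measure.addHaar_closedBall' _ _ (Real.sqrt_nonneg _)]
    congr 2
    rw [finrank_euclideanSpace, Fintype.card_fin]
    rw [← Real.rpow_natCast (Real.sqrt (2*η)) d, Real.sqrt_eq_rpow,
      ← Real.rpow_mul h2η]
    ring_nf
  calc volume T ≤ volume S *
      volume (Metric.closedBall (0 : EuclideanSpace ℝ (Fin d)) (Real.sqrt (2*η))) := hvol
    _ = ENNReal.ofReal ((2 * η) ^ ((d : ℝ) / 2)) *
      volume (Metric.closedBall (0 : EuclideanSpace ℝ (Fin d)) 1) * volume S := by
        rw [hball]; ring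
end

section
/- Let S̄ ⊆ ℝ^d be bounded measurable, A = {a ∈ ℤ^d : B_M(a) ⊆ S̄} with B_M(a) = M^{-1}a + M^{-1}[0,1]^d, and let T̄ = {(x,y) ∈ ℝ^d × ℝ^d : x ∈ S̄, x - y ∈ S̄, x + y ∈ S̄}. Then the number of pairs (a, b) ∈ ℤ^d × ℤ^d such that a, a - b, a + b ∈ A is at most (4M²)^d · vol(T̄). -/
/-! The boxes of side `1/(2M)` around the points `((a + 1/2)/M, b/M)` of `ℝ^d × ℝ^d`, one for each
pair `(a, b)` with `a, a - b, a + b ∈ A`, are pairwise disjoint, have volume `(4M²)^{-d}`, and lie in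
`T̄`: if `x` is within `1/(4M)` of `(a + 1/2)/M` and `y` within `1/(4M)` of `b/M` (sup norm), then
`x`, `x - y`, `x + y` are within `1/(2M)` of the centres of the cubes `B_M(a)`, `B_M(a - b)`,
`B_M(a + b)` contained in `S̄`. -/

open Function MeasureTheory Metric Set

namespace LatticeThreeAP

variable {E ι : Type*}

def threeAPSet [AddCommGroup E] (S : Set E) : Set (E × E) :=
  {p | p.1 ∈ S ∧ p.1 - p.2 ∈ S ∧ p.1 + p.2 ∈ S}

theorem closedBall_subset_threeAPSet [SeminormedAddCommGroup E] {S : Set E} {u v : E} {r : ℝ}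
    (hr : 0 ≤ r) (hu : closedBall u (2 * r) ⊆ S) (hsub : closedBall (u - v) (2 * r) ⊆ S)
    (hadd : closedBall (u + v) (2 * r) ⊆ S) :
    closedBall (u, v) r ⊆ threeAPSet S := by
  rintro ⟨x, y⟩ hxy
  rw [← closedBall_prod_same] at hxy
  obtain ⟨hx, hy⟩ : dist x u ≤ r ∧ dist y v ≤ r := hxy
  refine ⟨hu ?_, hsub ?_, hadd ?_⟩ <;> rw [mem_closedBall]
  · linarith [dist_nonneg (x := y) (y := v)]
  · linarith [dist_sub_sub_le x y u v]
  · linarith [dist_add_add_le x y u v]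

theorem ncard_mul_le_measure_of_pairwiseDisjoint [MeasurableSpace E] {μ : Measure E}
    {P : Set ι} {T : ι → Set E} {S : Set E} {c : ENNReal}
    (hmeas : ∀ p ∈ P, MeasurableSet (T p)) (hdisj : P.PairwiseDisjoint T)
    (hsub : ∀ p ∈ P, T p ⊆ S) (hc : ∀ p ∈ P, c ≤ μ (T p)) :
    P.ncard * c ≤ μ S := by
  by_cases hP : P.Finite
  · obtain ⟨s, rfl⟩ := hP.exists_finset_coe
    calc (s : Set ι).ncard * c = ∑ p ∈ s, c := by simp [ncard_coe_finset]
      _ ≤ ∑ p ∈ s, μ (T p) := Finset.sum_le_sum hc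
      _ = μ (⋃ p ∈ s, T p) := (measure_biUnion_finset hdisj hmeas).symm
      _ ≤ μ S := measure_mono (iUnion₂_subset hsub)
  · simp [Set.Infinite.ncard hP]

noncomputable def latticePoint (M t : ℝ) (a : ι → ℤ) : ι → ℝ := fun i => (a i + t) / M

theorem latticePoint_sub (M t : ℝ) (a b : ι → ℤ) :
    latticePoint M t a - latticePoint M 0 b = latticePoint M t (a - b) := by
  ext i; simp only [latticePoint, Pi.sub_apply, Int.cast_sub]; ring

theorem latticePoint_add (M t : ℝ) (a b : ι → ℤ) :
    latticePoint M t a + latticePoint M 0 b = latticePoint M t (a + b) := by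
  ext i; simp only [latticePoint, Pi.add_apply, Int.cast_add]; ring

variable [Fintype ι]

theorem inv_le_dist_latticePoint {M : ℝ} (hM : 0 < M) (t : ℝ) {a b : ι → ℤ} (hab : a ≠ b) :
    M⁻¹ ≤ dist (latticePoint M t a) (latticePoint M t b) := by
  obtain ⟨i, hi⟩ := Function.ne_iff.mp hab
  have hi' : (1 : ℝ) ≤ |(a i : ℝ) - b i| := by
    exact_mod_cast Int.one_le_abs (sub_ne_zero.mpr hi)
  calc M⁻¹ ≤ |(a i : ℝ) - b i| / M := by rw [inv_eq_one_div]; gcongr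
    _ = dist (latticePoint M t a i) (latticePoint M t b i) := by
      rw [Real.dist_eq, latticePoint, latticePoint, ← sub_div, abs_div, abs_of_pos hM]
      ring_nf
    _ ≤ _ := dist_le_pi_dist _ _ i

theorem pi_Icc_div_eq_closedBall {M : ℝ} (hM : 0 < M) (a : ι → ℤ) :
    (univ.pi fun i => Icc ((a i : ℝ) / M) ((a i : ℝ) / M + 1 / M)) =
      closedBall (latticePoint M (1 / 2) a) (2 * M)⁻¹ := by
  rw [closedBall_pi _ (by positivity)]
  congr! 2 with i
  rw [Real.closedBall_eq_Icc, latticePoint]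
  congr 1 <;> field_simp <;> ring

noncomputable def pairCenter (M : ℝ) (p : (ι → ℤ) × (ι → ℤ)) : (ι → ℝ) × (ι → ℝ) :=
  (latticePoint M (1 / 2) p.1, latticePoint M 0 p.2)

theorem pairwise_disjoint_closedBall_pairCenter {M : ℝ} (hM : 0 < M) :
    Pairwise (Disjoint on (fun p : (ι → ℤ) × (ι → ℤ) => closedBall (pairCenter M p) (4 * M)⁻¹)) := by
  intro p q hpq
  apply closedBall_disjoint_closedBall
  have hlt : (4 * M)⁻¹ + (4 * M)⁻¹ < M⁻¹ := by
    field_simp; norm_num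
  refine hlt.trans_le ?_
  rw [pairCenter, pairCenter, Prod.dist_eq]
  by_cases h : p.1 = q.1
  · exact le_max_of_le_right (inv_le_dist_latticePoint hM _ fun h' => hpq (Prod.ext h h'))
  · exact le_max_of_le_left (inv_le_dist_latticePoint hM _ h)

theorem volume_closedBall_inv_four_mul {M : ℕ} (hM : 0 < M) (x : (ι → ℝ) × (ι → ℝ)) :
    volume (closedBall x (4 * (M : ℝ))⁻¹) = ((4 * (M : ENNReal) ^ 2) ^ Fintype.card ι)⁻¹ := by
  have hside : 2 * (4 * (M : ℝ))⁻¹ * (2 * (4 * (M : ℝ))⁻¹) = (4 * (M : ℝ) ^ 2)⁻¹ := by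
    field_simp; ring
  rw [← closedBall_prod_same, Measure.volume_eq_prod, Measure.prod_prod,
    Real.volume_pi_closedBall _ (by positivity), Real.volume_pi_closedBall _ (by positivity),
    ← ENNReal.ofReal_mul (by positivity), ← mul_pow, hside, inv_pow,
    ENNReal.ofReal_inv_of_pos (by positivity), ENNReal.ofReal_pow (by positivity),
    ENNReal.ofReal_mul (by norm_num), ENNReal.ofReal_pow (by positivity), ENNReal.ofReal_natCast,
    ENNReal.ofReal_ofNat]

end LatticeThreeAP

open LatticeThreeAP

theorem stmt_14_general (d M : ℕ) (hM : 1 ≤ M)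
    (Sbar : Set (Fin d → ℝ))
    (BM : (Fin d → ℤ) → Set (Fin d → ℝ))
    (hBM : ∀ a, BM a = Set.univ.pi fun i =>
      Set.Icc ((a i : ℝ) / M) ((a i : ℝ) / M + 1 / M))
    (A : Set (Fin d → ℤ)) (hA : A = {a | BM a ⊆ Sbar})
    (Tbar : Set ((Fin d → ℝ) × (Fin d → ℝ)))
    (hT : Tbar = {p | p.1 ∈ Sbar ∧ p.1 - p.2 ∈ Sbar ∧ p.1 + p.2 ∈ Sbar}) :
    (({p : (Fin d → ℤ) × (Fin d → ℤ) |
        p.1 ∈ A ∧ p.1 - p.2 ∈ A ∧ p.1 + p.2 ∈ A}.ncard) : ENNReal) ≤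
      ((4 : ENNReal) * (M : ENNReal) ^ 2) ^ d * volume Tbar := by
  have hM0 : (0 : ℝ) < M := by exact_mod_cast hM
  have hcube : ∀ a ∈ A, closedBall (latticePoint M (1 / 2) a) (2 * (4 * (M : ℝ))⁻¹) ⊆ Sbar := by
    intro a ha
    have hradius : 2 * (4 * (M : ℝ))⁻¹ = (2 * (M : ℝ))⁻¹ := by field_simp; ring
    rw [hradius, ← pi_Icc_div_eq_closedBall hM0, ← hBM]
    rwa [hA] at ha
  have hpack := ncard_mul_le_measure_of_pairwiseDisjoint (μ := volume) (P := threeAPSet A)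
    (T := fun p => closedBall (pairCenter M p) (4 * (M : ℝ))⁻¹) (S := Tbar)
    (fun _ _ => measurableSet_closedBall)
    ((pairwise_disjoint_closedBall_pairCenter hM0).set_pairwise _)
    (fun p ⟨h1, h2, h3⟩ => hT ▸ closedBall_subset_threeAPSet (by positivity) (hcube _ h1)
      (latticePoint_sub M _ p.1 p.2 ▸ hcube _ h2) (latticePoint_add M _ p.1 p.2 ▸ hcube _ h3))
    (fun p _ => by rw [volume_closedBall_inv_four_mul hM, Fintype.card_fin])
  rwa [← div_eq_mul_inv, ENNReal.div_le_iff (by simp; omega) (by finiteness), mul_comm] at hpack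

theorem stmt_14 (d M : ℕ) (hM : 1 ≤ M)
    (Sbar : Set (Fin d → ℝ)) (hmeas : MeasurableSet Sbar)
    (hbdd : Bornology.IsBounded Sbar)
    (BM : (Fin d → ℤ) → Set (Fin d → ℝ))
    (hBM : ∀ a, BM a = Set.univ.pi fun i =>
      Set.Icc ((a i : ℝ) / M) ((a i : ℝ) / M + 1 / M))
    (A : Set (Fin d → ℤ)) (hA : A = {a | BM a ⊆ Sbar})
    (Tbar : Set ((Fin d → ℝ) × (Fin d → ℝ)))
    (hT : Tbar = {p | p.1 ∈ Sbar ∧ p.1 - p.2 ∈ Sbar ∧ p.1 + p.2 ∈ Sbar}) :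
    (({p : (Fin d → ℤ) × (Fin d → ℤ) |
        p.1 ∈ A ∧ p.1 - p.2 ∈ A ∧ p.1 + p.2 ∈ A}.ncard) : ENNReal) ≤
      ((4 : ENNReal) * (M : ENNReal) ^ 2) ^ d * volume Tbar :=
  stmt_14_general d M hM Sbar BM hBM A hA Tbar hT
end
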